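/- On the singular set {|α|² = |β|²}, the inner products of third derivatives of f = AA* with the dual g = Ae₃A* satisfy: ⟨f''',g⟩ = -(αβ/(2|α|²))λ', ⟨f''_z̄,g⟩ = λ'/2, ⟨f'_z̄z̄,g⟩ = λ_z̄/2, ⟨f_z̄z̄z̄,g⟩ = -(ᾱβ̄/(2|α|²))λ_z̄, where λ' = α'ᾱ - β'β̄ and λ_z̄ = α·conj(α') - β·conj(β'). -/

import Mathlib

open Matrix Complex ComplexConjugate

noncomputable def e2 : Matrix (Fin 2) (Fin 2) ℂ := !![0, Complex.I; -Complex.I, 0]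

def e3 : Matrix (Fin 2) (Fin 2) ℂ := !![1, 0; 0, -1]

/-- Complex-bilinear extension `⟨X,Y⟩ = -(1/2)·trace(X e₂ ᵗY e₂)` of the
Lorentzian inner product `-(1/2)·trace(X e₂ Y e₂)` on Hermitian matrices. -/
noncomputable def ip (X Y : Matrix (Fin 2) (Fin 2) ℂ) : ℂ :=
  -(1/2 : ℂ) * (X * e2 * Yᵀ * e2).trace

/-!
Conjugating the transpose of a `2 × 2` matrix by `e₂` gives its adjugate, so
`⟨X, Y⟩ = -(1/2)·trace(X · adj Y)`. As `adj` is anti-multiplicative and `adj A · A = det A`,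
this gives `⟨A M B, A N B⟩ = det A · det B · ⟨M, N⟩`. With `det A = 1` each inner product with
`g = A e₃ Aᴴ` is therefore `⟨M, e₃⟩ = (M₀₀ - M₁₁)/2`, and the four formulas become scalar
identities; the two with denominator `2|α|²` hold because `|α|² = |β|²`.
-/

theorem e2_mul_transpose_mul_e2 (Y : Matrix (Fin 2) (Fin 2) ℂ) :
    e2 * Yᵀ * e2 = Y.adjugate := by
  rw [adjugate_fin_two]
  ext i j
  fin_cases i <;> fin_cases j <;>
    simp [e2, mul_apply, vecMul, dotProduct, Fin.sum_univ_two, mul_right_comm _ _ I]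

theorem ip_eq_neg_half_trace_mul_adjugate (X Y : Matrix (Fin 2) (Fin 2) ℂ) :
    ip X Y = -(1/2 : ℂ) * (X * Y.adjugate).trace := by
  rw [ip, Matrix.mul_assoc X, Matrix.mul_assoc X, e2_mul_transpose_mul_e2]

theorem ip_mul_mul (A B M N : Matrix (Fin 2) (Fin 2) ℂ) :
    ip (A * M * B) (A * N * B) = A.det * B.det * ip M N := by
  simp only [ip_eq_neg_half_trace_mul_adjugate, adjugate_mul_distrib]
  have regroup : A * M * B * (B.adjugate * (N.adjugate * A.adjugate))
      = A * (M * (B * B.adjugate) * N.adjugate) * A.adjugate := by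
    simp only [Matrix.mul_assoc]
  rw [regroup, trace_mul_cycle, adjugate_mul, mul_adjugate]
  simp only [Matrix.smul_mul, Matrix.mul_smul, Matrix.one_mul, Matrix.mul_one, trace_smul,
    smul_eq_mul]
  ring

theorem ip_e3 (M : Matrix (Fin 2) (Fin 2) ℂ) : ip M e3 = (M 0 0 - M 1 1) / 2 := by
  rw [ip_eq_neg_half_trace_mul_adjugate, e3, adjugate_fin_two_of, eta_fin_two M, mul_fin_two,
    trace_fin_two_of]
  simp only [of_apply, cons_val', cons_val_zero, cons_val_one, cons_val_fin_one]
  ring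

theorem ip_mul_mul_conjTranspose_e3 (A M : Matrix (Fin 2) (Fin 2) ℂ) (hA : A.det = 1) :
    ip (A * M * Aᴴ) (A * e3 * Aᴴ) = (M 0 0 - M 1 1) / 2 := by
  rw [ip_mul_mul, det_conjTranspose, hA, star_one, one_mul, one_mul, ip_e3]

/-- On the singular set `{|α|² = |β|²}` (`det A = 1`, `α ≠ 0`), the inner
products of the third derivatives of `f = AAᴴ` with the dual `g = Ae₃Aᴴ` are
`⟨f''',g⟩ = -(αβ/(2|α|²))λ'`, `⟨f''_z̄,g⟩ = λ'/2`, `⟨f'_z̄z̄,g⟩ = λ_z̄/2`,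
`⟨f_z̄z̄z̄,g⟩ = -(ᾱβ̄/(2|α|²))λ_z̄`, with `λ' = α'ᾱ - β'β̄`,
`λ_z̄ = α·conj α' - β·conj β'`. Here `a,b,da,db,dda,ddb` denote the values of
`α,β,α',β',α'',β''` at the point, and the third derivatives are given by their
explicit matrix formulas. -/
theorem inner_products_third_derivatives (A : Matrix (Fin 2) (Fin 2) ℂ)
    (hA : A.det = 1) (a b da db dda ddb : ℂ) (ha : a ≠ 0)
    (hsing : a * conj a = b * conj b) :
    ip (A * !![da * b + 2 * a * db, dda + a ^ 2 * b;
               ddb + a * b ^ 2, 2 * da * b + a * db] * Aᴴ) (A * e3 * Aᴴ)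
      = -(a * b / (2 * (a * conj a))) * (da * conj a - db * conj b) ∧
    ip (A * !![da * conj a, a * (b * conj b); b * (a * conj a), db * conj b]
          * Aᴴ) (A * e3 * Aᴴ)
      = (da * conj a - db * conj b) / 2 ∧
    ip (A * !![a * conj da, conj b * (a * conj a);
               conj a * (b * conj b), b * conj db] * Aᴴ) (A * e3 * Aᴴ)
      = (a * conj da - b * conj db) / 2 ∧
    ip (A * !![conj (da * b + 2 * a * db), conj ddb + conj a * conj b ^ 2;
               conj dda + conj a ^ 2 * conj b, conj (2 * da * b + a * db)]
          * Aᴴ) (A * e3 * Aᴴ)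
      = -(conj a * conj b / (2 * (a * conj a))) * (a * conj da - b * conj db) := by
  have ha' : conj a ≠ 0 := (map_ne_zero conj).mpr ha
  simp only [ip_mul_mul_conjTranspose_e3 A _ hA, of_apply, cons_val', cons_val_zero, cons_val_one,
    empty_val', cons_val_fin_one, map_add, map_mul, Complex.conj_ofNat]
  refine ⟨?_, trivial, trivial, ?_⟩
  · field_simp
    linear_combination db * hsing
  · field_simp
    linear_combination conj db * hsing
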